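/- Define polynomials C_n(q) by C_1(q) = q^k and C_{n}(q) = (C_{n-1}(q) + q)^k for n >= 2 (the first cut bound C_{k,n,2}). For fixed q ∈ [0,1] and k >= 2, the sequence C_n(q) is nondecreasing in n; it converges to the smallest solution z of z = (z+q)^k if and only if 0 <= q <= q*_k := ((k-1)/k^2) * k^{(k-2)/(k-1)}, and diverges to infinity for q > q*_k. -/

import Mathlib

open Filter Topology

/-- The first cut bound `C_{k,n,2}(q)` for tree percolation, defined by
`C_1(q) = q^k` and `C_n(q) = (C_{n-1}(q) + q)^k`.  Here `cutBound k q m`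
is `C_{m+1}(q)`. -/
noncomputable def cutBound (k : ℕ) (q : ℝ) : ℕ → ℝ
  | 0 => q ^ k
  | m + 1 => (cutBound k q m + q) ^ k

/-- The critical value `q*_k = ((k-1)/k^2) k^{(k-2)/(k-1)}` of the cut bounds. -/
noncomputable def qStar (k : ℕ) : ℝ :=
  (((k : ℝ) - 1) / (k : ℝ) ^ 2) * (k : ℝ) ^ (((k : ℝ) - 2) / ((k : ℝ) - 1))

/-!
The map `f z = (z + q)^k` is increasing and convex on `[0, ∞)`, and `C_n = f^[n] 0`, so `C_n`
increases and stays below every nonnegative fixed point of `f`. A bounded `C_n` converges to a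
fixed point, which is then the least one; an unbounded `C_n` tends to `∞`. So everything hinges on
whether `f` has a nonnegative fixed point `z`, i.e. whether `t - t^k = q` for some `t = z + q ≥ q`.
By convexity (Bernoulli's inequality at the tangency point `c = k^{-1/(k-1)}`, where
`k c^{k-1} = 1`) the maximum of `t - t^k` over `t ≥ 0` is `c - c^k = q*_k`.
-/

/-- Bernoulli's inequality, read as `t ↦ t^k` lying above its tangent line at `c > 0`. -/
theorem pow_add_mul_sub_le_pow {c t : ℝ} (hc : 0 < c) (ht : -c ≤ t) (k : ℕ) :
    c ^ k + k * c ^ (k - 1) * (t - c) ≤ t ^ k := by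
  rcases k with _ | k
  · simp
  have hbern := one_add_mul_le_pow (a := t / c - 1)
    (by rw [le_sub_iff_add_le, le_div_iff₀ hc]; linarith) (k + 1)
  rw [add_sub_cancel, div_pow, le_div_iff₀ (pow_pos hc _)] at hbern
  calc c ^ (k + 1) + ↑(k + 1) * c ^ (k + 1 - 1) * (t - c)
      = (1 + ↑(k + 1) * (t / c - 1)) * c ^ (k + 1) := by
        rw [Nat.add_sub_cancel, pow_succ]; field_simp
    _ ≤ t ^ (k + 1) := hbern

/-- The value of `z + q` at which the graph of `z ↦ (z + q)^k` touches the diagonal when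
`q = q*_k`. -/
noncomputable def tangencyPoint (k : ℕ) : ℝ := (k : ℝ) ^ (-((k : ℝ) - 1)⁻¹)

section TangencyPoint

variable {k : ℕ}

theorem tangencyPoint_pos (hk : 1 ≤ k) : 0 < tangencyPoint k :=
  Real.rpow_pos_of_pos (by exact_mod_cast hk) _

theorem tangencyPoint_pow_pred (hk : 2 ≤ k) : tangencyPoint k ^ (k - 1) = (k : ℝ)⁻¹ := by
  have hk1 : (1 : ℝ) < k := by exact_mod_cast hk
  rw [tangencyPoint, ← Real.rpow_natCast, ← Real.rpow_mul (by linarith),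
    Nat.cast_sub (by omega), Nat.cast_one, neg_mul, inv_mul_cancel₀ (by linarith),
    Real.rpow_neg_one]

theorem tangencyPoint_sub_pow (hk : 2 ≤ k) : tangencyPoint k - tangencyPoint k ^ k = qStar k := by
  have hk1 : (1 : ℝ) < k := by exact_mod_cast hk
  have hpow : tangencyPoint k ^ k = tangencyPoint k / k := by
    rw [← pow_sub_one_mul (by omega : k ≠ 0), tangencyPoint_pow_pred hk]
    ring
  have hexp : ((k : ℝ) - 2) / ((k : ℝ) - 1) = 1 + -((k : ℝ) - 1)⁻¹ := by
    field_simp [show (k : ℝ) - 1 ≠ 0 by linarith]; ring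
  rw [hpow, qStar, hexp, Real.rpow_add (by linarith), Real.rpow_one, ← tangencyPoint]
  field_simp

theorem sub_pow_le_qStar (hk : 2 ≤ k) {t : ℝ} (ht : 0 ≤ t) : t - t ^ k ≤ qStar k := by
  have hc := tangencyPoint_pos (by omega : 1 ≤ k)
  have htangent := pow_add_mul_sub_le_pow hc (by linarith) k (t := t)
  rw [tangencyPoint_pow_pred hk, mul_inv_cancel₀ (by positivity), one_mul] at htangent
  rw [← tangencyPoint_sub_pow hk]
  linarith

theorem qStar_le_tangencyPoint (hk : 2 ≤ k) : qStar k ≤ tangencyPoint k := by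
  rw [← tangencyPoint_sub_pow hk]
  exact sub_le_self _ (pow_nonneg (tangencyPoint_pos (by omega)).le k)

end TangencyPoint

section CutBound

variable {k : ℕ} {q : ℝ}

theorem cutBound_nonneg (hq : 0 ≤ q) (m : ℕ) : 0 ≤ cutBound k q m := by
  cases m with
  | zero => exact pow_nonneg hq k
  | succ m => exact pow_nonneg (add_nonneg (cutBound_nonneg hq m) hq) k

theorem cutBound_monotone (hq : 0 ≤ q) : Monotone (cutBound k q) := by
  refine monotone_nat_of_le_succ fun n => ?_
  induction n with
  | zero => exact pow_le_pow_left₀ hq (le_add_of_nonneg_left (pow_nonneg hq k)) k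
  | succ n ih => exact pow_le_pow_left₀ (add_nonneg (cutBound_nonneg hq n) hq) (by linarith) k

theorem cutBound_le_of_fixed (hq : 0 ≤ q) {z : ℝ} (hz : 0 ≤ z) (hfix : z = (z + q) ^ k)
    (m : ℕ) : cutBound k q m ≤ z := by
  induction m with
  | zero => rw [hfix]; exact pow_le_pow_left₀ hq (by linarith) k
  | succ n ih =>
    rw [hfix]
    exact pow_le_pow_left₀ (add_nonneg (cutBound_nonneg hq n) hq) (by linarith) k

theorem eq_add_pow_of_tendsto_cutBound {L : ℝ} (h : Tendsto (cutBound k q) atTop (𝓝 L)) :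
    L = (L + q) ^ k :=
  tendsto_nhds_unique (h.comp (tendsto_add_atTop_nat 1)) ((h.add tendsto_const_nhds).pow k)

/-- `C_n` is bounded by every nonnegative fixed point, so its limit is the least one. -/
theorem exists_isLeast_fixed_and_tendsto_cutBound (hq : 0 ≤ q) {z₀ : ℝ} (hz₀ : 0 ≤ z₀)
    (hfix : z₀ = (z₀ + q) ^ k) :
    ∃ z : ℝ, IsLeast {z : ℝ | 0 ≤ z ∧ z = (z + q) ^ k} z ∧
      Tendsto (cutBound k q) atTop (𝓝 z) := by
  have hbdd : BddAbove (Set.range (cutBound k q)) :=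
    ⟨z₀, Set.forall_mem_range.2 (cutBound_le_of_fixed hq hz₀ hfix)⟩
  have hlim := tendsto_atTop_ciSup (cutBound_monotone hq) hbdd
  have hlim_nonneg : 0 ≤ ⨆ m, cutBound k q m := (cutBound_nonneg hq 0).trans (le_ciSup hbdd 0)
  refine ⟨_, ⟨⟨hlim_nonneg, eq_add_pow_of_tendsto_cutBound hlim⟩, ?_⟩, hlim⟩
  rintro z ⟨hz, hzfix⟩
  exact ciSup_le (cutBound_le_of_fixed hq hz hzfix)

end CutBound

section FixedPoint

variable {k : ℕ} (hk : 2 ≤ k) {q : ℝ}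
include hk

/-- Intermediate value theorem on `[0, tangencyPoint k - q]`: `(z + q)^k - z` is `q^k ≥ 0` at the
left end and `q - q*_k ≤ 0` at the right end. -/
theorem exists_nonneg_fixed_of_le_qStar (hq : 0 ≤ q) (hqs : q ≤ qStar k) :
    ∃ z : ℝ, 0 ≤ z ∧ z = (z + q) ^ k := by
  have hcq : 0 ≤ tangencyPoint k - q := by linarith [qStar_le_tangencyPoint hk]
  have hcont : ContinuousOn (fun z : ℝ => (z + q) ^ k - z) (Set.Icc 0 (tangencyPoint k - q)) := by
    fun_prop
  have hsign : (0 : ℝ) ∈ Set.Icc ((tangencyPoint k - q + q) ^ k - (tangencyPoint k - q))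
      ((0 + q) ^ k - 0) :=
    ⟨by rw [sub_add_cancel]; linarith [tangencyPoint_sub_pow hk],
      by simpa using pow_nonneg hq k⟩
  obtain ⟨z, ⟨hz, -⟩, hzero⟩ := intermediate_value_Icc' hcq hcont hsign
  exact ⟨z, hz, by linarith [show (z + q) ^ k - z = 0 from hzero]⟩

theorem lt_add_pow_of_qStar_lt (hq : 0 ≤ q) (hqs : qStar k < q) {z : ℝ} (hz : 0 ≤ z) :
    z < (z + q) ^ k := by
  linarith [sub_pow_le_qStar hk (t := z + q) (by linarith)]

end FixedPoint

theorem cutBound_monotone_and_critical_general (k : ℕ) (hk : 2 ≤ k) (q : ℝ)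
    (hq0 : 0 ≤ q) :
    Monotone (cutBound k q) ∧
    (q ≤ qStar k →
      ∃ z : ℝ, IsLeast {z : ℝ | 0 ≤ z ∧ z = (z + q) ^ k} z ∧
        Tendsto (cutBound k q) atTop (nhds z)) ∧
    (qStar k < q → Tendsto (cutBound k q) atTop atTop) := by
  refine ⟨cutBound_monotone hq0, fun hq => ?_, fun hq => ?_⟩
  · obtain ⟨z₀, hz₀, hfix⟩ := exists_nonneg_fixed_of_le_qStar hk hq0 hq
    exact exists_isLeast_fixed_and_tendsto_cutBound hq0 hz₀ hfix
  · refine (tendsto_atTop_of_monotone (cutBound_monotone hq0)).resolve_right ?_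
    rintro ⟨L, hL⟩
    exact (lt_add_pow_of_qStar_lt hk hq0 hq (ge_of_tendsto' hL (cutBound_nonneg hq0))).ne
      (eq_add_pow_of_tendsto_cutBound hL)

/-- For fixed `q ∈ [0,1]` and `k ≥ 2`, the sequence `C_n(q)` given by
`C_1(q) = q^k`, `C_n(q) = (C_{n-1}(q)+q)^k` is nondecreasing in `n`; it converges
to the smallest (nonnegative) solution `z` of `z = (z+q)^k` if and only if
`0 ≤ q ≤ q*_k := ((k-1)/k^2) k^{(k-2)/(k-1)}`, and diverges to infinity for
`q > q*_k`. -/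
theorem cutBound_monotone_and_critical (k : ℕ) (hk : 2 ≤ k) (q : ℝ)
    (hq0 : 0 ≤ q) (hq1 : q ≤ 1) :
    Monotone (cutBound k q) ∧
    (q ≤ qStar k →
      ∃ z : ℝ, IsLeast {z : ℝ | 0 ≤ z ∧ z = (z + q) ^ k} z ∧
        Tendsto (cutBound k q) atTop (nhds z)) ∧
    (qStar k < q → Tendsto (cutBound k q) atTop atTop) :=
  cutBound_monotone_and_critical_general k hk q hq0
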